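/- For μ ≠ 0 and real x > 0, the derivative of the function φ(x) = |exp_μ(-ix)|² equals (-μ)·2^{2μ+1}·Γ(μ+1/2)²·x^{-2μ}·(J_{μ+1/2}(x))², where J_ν denotes the Bessel function of the first kind of order ν. In particular, φ is strictly decreasing on (0,∞) when μ > 0 and strictly increasing on (0,∞) when -1/2 < μ < 0. -/

import Mathlib

open Finset

/-- The μ-deformed factorial function γ_μ. -/
noncomputable def gammaMu (μ : ℝ) : ℕ → ℝ
  | 0 => 1
  | n + 1 => ((n + 1 : ℝ) + 2 * μ * (if Odd (n + 1) then 1 else 0)) * gammaMu μ n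

/-- The μ-deformed binomial coefficient C_μ(n,k), zero outside 0 ≤ k ≤ n. -/
noncomputable def binomMu (μ : ℝ) (n : ℕ) (k : ℤ) : ℝ :=
  if 0 ≤ k ∧ k ≤ (n : ℤ) then gammaMu μ n / (gammaMu μ (n - k.toNat) * gammaMu μ k.toNat) else 0

/-- The n-th μ-deformed binomial polynomial p_{n,μ}(x,y). -/
noncomputable def pMu (μ : ℝ) (n : ℕ) (x y : ℂ) : ℂ :=
  ∑ k ∈ Finset.range (n + 1), (binomMu μ n k : ℂ) * x ^ k * y ^ (n - k)

/-- The μ-deformed exponential function. -/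
noncomputable def expMu (μ : ℝ) (z : ℂ) : ℂ :=
  ∑' n : ℕ, z ^ n / (gammaMu μ n : ℂ)

/-- The Bessel function of the first kind of order ν, for positive real argument. -/
noncomputable def besselJ (ν x : ℝ) : ℝ :=
  ∑' m : ℕ, ((-1) ^ m / (Nat.factorial m * Real.Gamma (ν + m + 1))) * (x / 2) ^ ((2 * m : ℝ) + ν)

/-!
Splitting the series of `exp_μ(-it)` into even and odd powers gives `exp_μ(-it) = C(t) - i S(t)`
with real entire series `C` and `S`. The recursion defining `γ_μ` turns into the system
`C' = -S`, `S' = C - 2μ S / t`, so `φ = C² + S²` has `φ' = -4μ S² / t`. Comparing coefficients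
through `Γ(s + 1) = s Γ(s)`, `S(t) = Γ(μ + 1/2) 2^(μ - 1/2) t^(1/2 - μ) J_{μ+1/2}(t)`.
Finally `S` is analytic with `S'(0) = 1 / γ_μ(1) ≠ 0`, so it vanishes on no interval, and the sign
of `φ'` gives strict monotonicity.
-/

open FormalMultilinearSeries

section EntireSeries

variable {𝕜 : Type*} [NontriviallyNormedField 𝕜] [CompleteSpace 𝕜] {a : ℕ → 𝕜}

theorem hasFPowerSeriesOnBall_tsum_mul_pow (ha : (ofScalars 𝕜 a).radius = ⊤) :
    HasFPowerSeriesOnBall (fun x => ∑' n, a n * x ^ n) (ofScalars 𝕜 a) 0 ⊤ := by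
  have h := (ofScalars 𝕜 a).hasFPowerSeriesOnBall (by simp [ha])
  rw [ha] at h
  convert h using 1
  ext x
  rw [← ofScalarsSum, ofScalars_sum_eq]
  simp

theorem summable_mul_pow_of_radius_eq_top (ha : (ofScalars 𝕜 a).radius = ⊤) (x : 𝕜) :
    Summable fun n => a n * x ^ n := by
  simpa [ofScalars_apply_eq, mul_comm] using
    ((hasFPowerSeriesOnBall_tsum_mul_pow ha).hasSum (y := x) (by simp)).summable

theorem hasSum_deriv_tsum_mul_pow (ha : (ofScalars 𝕜 a).radius = ⊤) (x : 𝕜) :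
    HasSum (fun n => (n + 1) * a (n + 1) * x ^ n) (deriv (fun x => ∑' n, a n * x ^ n) x) := by
  have hf := hasFPowerSeriesOnBall_tsum_mul_pow ha
  set f := fun x : 𝕜 => ∑' n, a n * x ^ n
  rcases eq_or_ne x 0 with rfl | hx
  · rw [hf.hasFPowerSeriesAt.deriv]
    convert hasSum_single (f := fun n : ℕ => (n + 1) * a (n + 1) * (0 : 𝕜) ^ n) 0
      (fun n hn => by simp [hn]) using 1
    simp
  · -- the derived series at `x`, applied to the vector `x`, sums to `x * deriv f x`
    have hfx : fderiv 𝕜 f x x = x * deriv f x := by simp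
    have hsum := (ContinuousLinearMap.apply 𝕜 𝕜 x).hasSum (hf.fderiv.hasSum (y := x) (by simp))
    simp only [zero_add, ContinuousLinearMap.apply_apply, derivSeries_apply_diag,
      ofScalars_apply_eq, nsmul_eq_mul, smul_eq_mul, hfx] at hsum
    have hdiv := hsum.mul_left x⁻¹
    rw [inv_mul_cancel_left₀ hx] at hdiv
    refine hdiv.congr_fun fun n => ?_
    field_simp
    push_cast
    ring

theorem hasDerivAt_tsum_mul_pow (ha : (ofScalars 𝕜 a).radius = ⊤) {x d : 𝕜}
    (hd : HasSum (fun n => (n + 1) * a (n + 1) * x ^ n) d) :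
    HasDerivAt (fun x => ∑' n, a n * x ^ n) d x := by
  rw [hd.unique (hasSum_deriv_tsum_mul_pow ha x)]
  exact ((hasFPowerSeriesOnBall_tsum_mul_pow ha).analyticAt_of_mem (by simp)).differentiableAt
    |>.hasDerivAt

end EntireSeries

section GammaMu

variable {μ : ℝ}

theorem gammaMu_two_mul_add_one (μ : ℝ) (m : ℕ) :
    gammaMu μ (2 * m + 1) = (2 * m + 1 + 2 * μ) * gammaMu μ (2 * m) := by
  simp [gammaMu]

theorem gammaMu_two_mul_add_two (μ : ℝ) (m : ℕ) :
    gammaMu μ (2 * m + 2) = (2 * m + 2) * gammaMu μ (2 * m + 1) := by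
  rw [gammaMu, if_neg (by simp [parity_simps])]
  push_cast
  ring

theorem exists_pow_mul_factorial_le_gammaMu (hμ : -(1/2 : ℝ) < μ) :
    ∃ c > 0, ∀ n, c ^ n * n.factorial ≤ gammaMu μ n := by
  have hc : 0 < min 1 (1 + 2 * μ) := lt_min one_pos (by linarith)
  refine ⟨_, hc, fun n => ?_⟩
  induction n with
  | zero => simp [gammaMu]
  | succ n ih =>
    have hfactor : min 1 (1 + 2 * μ) * (n + 1) ≤
        (n + 1 : ℝ) + 2 * μ * (if Odd (n + 1) then 1 else 0) := by
      have : (0 : ℝ) ≤ n := n.cast_nonneg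
      split_ifs <;> nlinarith [min_le_left 1 (1 + 2 * μ), min_le_right 1 (1 + 2 * μ)]
    rw [gammaMu, pow_succ, Nat.factorial_succ, Nat.cast_mul, Nat.cast_succ]
    calc _ = min 1 (1 + 2 * μ) * (n + 1) * (min 1 (1 + 2 * μ) ^ n * n.factorial) := by ring
      _ ≤ _ := mul_le_mul hfactor ih (by positivity) (le_trans (by positivity) hfactor)

theorem gammaMu_pos (hμ : -(1/2 : ℝ) < μ) (n : ℕ) : 0 < gammaMu μ n := by
  obtain ⟨c, hc, hle⟩ := exists_pow_mul_factorial_le_gammaMu hμ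
  exact lt_of_lt_of_le (by positivity) (hle n)

theorem summable_pow_div_gammaMu (hμ : -(1/2 : ℝ) < μ) (r : ℝ) :
    Summable fun n => r ^ n / gammaMu μ n := by
  obtain ⟨c, hc, hle⟩ := exists_pow_mul_factorial_le_gammaMu hμ
  refine (Real.summable_pow_div_factorial (|r| / c)).of_norm_bounded fun n => ?_
  rw [norm_div, norm_pow, Real.norm_eq_abs, Real.norm_of_nonneg (gammaMu_pos hμ n).le, div_pow,
    div_div]
  exact div_le_div_of_nonneg_left (by positivity) (by positivity) (hle n)

end GammaMu

-- For `μ = 0` these are the Taylor coefficients of `cos` and `sin`.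
noncomputable def cosMuCoeff (μ : ℝ) (n : ℕ) : ℝ :=
  if Even n then (-1) ^ (n / 2) / gammaMu μ n else 0

noncomputable def sinMuCoeff (μ : ℝ) (n : ℕ) : ℝ :=
  if Odd n then (-1) ^ (n / 2) / gammaMu μ n else 0

noncomputable def cosMu (μ t : ℝ) : ℝ := ∑' n, cosMuCoeff μ n * t ^ n

noncomputable def sinMu (μ t : ℝ) : ℝ := ∑' n, sinMuCoeff μ n * t ^ n

section CosMuSinMu

variable {μ : ℝ}

theorem radius_ofScalars_eq_top_of_abs_le (hμ : -(1/2 : ℝ) < μ) {c : ℕ → ℝ}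
    (hc : ∀ n, |c n| ≤ 1 / gammaMu μ n) : (ofScalars ℝ c).radius = ⊤ := by
  refine radius_eq_top_of_summable_norm _ fun r => ?_
  refine (summable_pow_div_gammaMu hμ r).of_nonneg_of_le (fun n => by positivity) fun n => ?_
  rw [ofScalars_norm, Real.norm_eq_abs, div_eq_mul_one_div, mul_comm]
  exact mul_le_mul_of_nonneg_left (hc n) (by positivity)

theorem radius_cosMuCoeff (hμ : -(1/2 : ℝ) < μ) : (ofScalars ℝ (cosMuCoeff μ)).radius = ⊤ :=
  radius_ofScalars_eq_top_of_abs_le hμ fun n => by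
    unfold cosMuCoeff
    split_ifs <;> simp [abs_div, abs_of_pos (gammaMu_pos hμ n), (gammaMu_pos hμ n).le]

theorem radius_sinMuCoeff (hμ : -(1/2 : ℝ) < μ) : (ofScalars ℝ (sinMuCoeff μ)).radius = ⊤ :=
  radius_ofScalars_eq_top_of_abs_le hμ fun n => by
    unfold sinMuCoeff
    split_ifs <;> simp [abs_div, abs_of_pos (gammaMu_pos hμ n), (gammaMu_pos hμ n).le]

theorem hasSum_cosMu (hμ : -(1/2 : ℝ) < μ) (t : ℝ) :
    HasSum (fun n => cosMuCoeff μ n * t ^ n) (cosMu μ t) :=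
  (summable_mul_pow_of_radius_eq_top (radius_cosMuCoeff hμ) t).hasSum

theorem hasSum_sinMu (hμ : -(1/2 : ℝ) < μ) (t : ℝ) :
    HasSum (fun n => sinMuCoeff μ n * t ^ n) (sinMu μ t) :=
  (summable_mul_pow_of_radius_eq_top (radius_sinMuCoeff hμ) t).hasSum

theorem succ_mul_cosMuCoeff_succ (μ : ℝ) (n : ℕ) :
    (n + 1) * cosMuCoeff μ (n + 1) = -sinMuCoeff μ n := by
  obtain ⟨k, rfl | rfl⟩ := Nat.even_or_odd' n
  · simp [cosMuCoeff, sinMuCoeff, parity_simps]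
  · have hk₁ : (2 * k + 1 + 1) / 2 = k + 1 := by omega
    have hk₂ : (2 * k + 1) / 2 = k := by omega
    simp only [cosMuCoeff, sinMuCoeff, hk₁, hk₂,
      if_pos (by simp [parity_simps] : Even (2 * k + 1 + 1)),
      if_pos (by simp [parity_simps] : Odd (2 * k + 1)), gammaMu_two_mul_add_two]
    rcases eq_or_ne (gammaMu μ (2 * k + 1)) 0 with h | h
    · simp [h]
    · field_simp
      push_cast
      ring

theorem succ_mul_sinMuCoeff_succ (hμ : -(1/2 : ℝ) < μ) (n : ℕ) :
    (n + 1) * sinMuCoeff μ (n + 1) = cosMuCoeff μ n - 2 * μ * sinMuCoeff μ (n + 1) := by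
  obtain ⟨k, rfl | rfl⟩ := Nat.even_or_odd' n
  · have hk₁ : (2 * k + 1) / 2 = k := by omega
    have hk₂ : 2 * k / 2 = k := by omega
    have hfactor : (2 * k + 1 + 2 * μ : ℝ) ≠ 0 := by
      have : (0 : ℝ) ≤ k := k.cast_nonneg
      exact ne_of_gt (by linarith)
    simp only [cosMuCoeff, sinMuCoeff, hk₁, hk₂, if_pos (by simp : Even (2 * k)),
      if_pos (by simp : Odd (2 * k + 1)), gammaMu_two_mul_add_one]
    have := gammaMu_pos hμ (2 * k)
    field_simp
    push_cast
    ring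
  · simp [cosMuCoeff, sinMuCoeff, parity_simps]

theorem hasDerivAt_cosMu (hμ : -(1/2 : ℝ) < μ) (x : ℝ) :
    HasDerivAt (cosMu μ) (-sinMu μ x) x :=
  hasDerivAt_tsum_mul_pow (radius_cosMuCoeff hμ) <|
    (hasSum_sinMu hμ x).neg.congr_fun fun n => by rw [succ_mul_cosMuCoeff_succ]; ring

theorem hasDerivAt_sinMu (hμ : -(1/2 : ℝ) < μ) {x : ℝ} (hx : x ≠ 0) :
    HasDerivAt (sinMu μ) (cosMu μ x - 2 * μ * (sinMu μ x / x)) x := by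
  have hshift : HasSum (fun n => sinMuCoeff μ (n + 1) * x ^ n) (sinMu μ x / x) := by
    have h := (hasSum_nat_add_iff' 1).mpr (hasSum_sinMu hμ x)
    have h0 : sinMuCoeff μ 0 = 0 := by simp [sinMuCoeff]
    simp only [Finset.range_one, Finset.sum_singleton, h0, zero_mul, sub_zero] at h
    refine (h.div_const x).congr_fun fun n => ?_
    rw [pow_succ]
    field_simp
  exact hasDerivAt_tsum_mul_pow (radius_sinMuCoeff hμ) <|
    ((hasSum_cosMu hμ x).sub (hshift.mul_left (2 * μ))).congr_fun fun n => by
      rw [succ_mul_sinMuCoeff_succ hμ]; ring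

end CosMuSinMu

section ExpMu

open Complex

variable {μ : ℝ}

theorem neg_I_mul_pow_div_gammaMu (μ t : ℝ) (n : ℕ) :
    (-I * t) ^ n / gammaMu μ n = ↑(cosMuCoeff μ n * t ^ n) - I * ↑(sinMuCoeff μ n * t ^ n) := by
  have hI : (-I) ^ 2 = -1 := by simp
  obtain ⟨k, rfl | rfl⟩ := Nat.even_or_odd' n
  · have hk : 2 * k / 2 = k := by omega
    rw [mul_pow, pow_mul, hI]
    simp only [cosMuCoeff, sinMuCoeff, hk, if_pos (even_two_mul k),
      if_neg (Nat.not_odd_iff_even.mpr (even_two_mul k))]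
    push_cast
    ring
  · have hk : (2 * k + 1) / 2 = k := by omega
    rw [mul_pow, pow_succ, pow_mul, hI]
    simp only [cosMuCoeff, sinMuCoeff, hk, if_pos (odd_two_mul_add_one k),
      if_neg (Nat.not_even_iff_odd.mpr (odd_two_mul_add_one k))]
    push_cast
    ring

theorem expMu_neg_I_mul (hμ : -(1/2 : ℝ) < μ) (t : ℝ) :
    expMu μ (-I * t) = cosMu μ t - I * sinMu μ t :=
  ((hasSum_ofReal.mpr (hasSum_cosMu hμ t)).sub
    ((hasSum_ofReal.mpr (hasSum_sinMu hμ t)).mul_left I)).congr_fun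
    (neg_I_mul_pow_div_gammaMu μ t) |>.tsum_eq

theorem norm_expMu_neg_I_mul_sq (hμ : -(1/2 : ℝ) < μ) (t : ℝ) :
    ‖expMu μ (-I * t)‖ ^ 2 = cosMu μ t ^ 2 + sinMu μ t ^ 2 := by
  rw [expMu_neg_I_mul hμ, Complex.sq_norm, normSq_apply]
  simp
  ring

end ExpMu

theorem hasDerivAt_cosMu_sq_add_sinMu_sq {μ : ℝ} (hμ : -(1/2 : ℝ) < μ) {x : ℝ} (hx : x ≠ 0) :
    HasDerivAt (fun t => cosMu μ t ^ 2 + sinMu μ t ^ 2) (-μ * (4 * sinMu μ x ^ 2 / x)) x := by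
  refine (((hasDerivAt_cosMu hμ x).fun_pow 2).add
    ((hasDerivAt_sinMu hμ hx).fun_pow 2)).congr_deriv ?_
  field_simp
  ring

section Bessel

variable {μ : ℝ}

theorem gammaMu_two_mul_add_one_mul_Gamma (hμ : -(1/2 : ℝ) < μ) (m : ℕ) :
    gammaMu μ (2 * m + 1) * Real.Gamma (μ + 1/2) =
      2 ^ (2 * m + 1) * m.factorial * Real.Gamma (μ + m + 3/2) := by
  have hΓ (s : ℝ) (hs : 0 < s) : Real.Gamma (s + 1) = s * Real.Gamma s :=
    Real.Gamma_add_one hs.ne'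
  induction m with
  | zero =>
    rw [gammaMu_two_mul_add_one, show μ + ((0 : ℕ) : ℝ) + 3/2 = (μ + 1/2) + 1 by push_cast; ring,
      hΓ _ (by linarith)]
    simp [gammaMu]
    ring
  | succ m ih =>
    have hm : (0 : ℝ) ≤ m := m.cast_nonneg
    rw [gammaMu_two_mul_add_one,
      show 2 * (m + 1) = 2 * m + 2 by ring, gammaMu_two_mul_add_two,
      show μ + ((m + 1 : ℕ) : ℝ) + 3/2 = (μ + m + 3/2) + 1 by push_cast; ring,
      hΓ _ (by linarith), Nat.factorial_succ]
    push_cast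
    linear_combination (2 * (m + 1) + 1 + 2 * μ) * (2 * m + 2) * ih

theorem hasSum_sinMu_odd (hμ : -(1/2 : ℝ) < μ) (t : ℝ) :
    HasSum (fun m : ℕ => (-1) ^ m * t ^ (2 * m + 1) / gammaMu μ (2 * m + 1)) (sinMu μ t) := by
  have hinj : Function.Injective fun m : ℕ => 2 * m + 1 := fun a b h => by simp at h; omega
  have hzero : ∀ n ∉ Set.range (fun m : ℕ => 2 * m + 1), sinMuCoeff μ n * t ^ n = 0 := by
    intro n hn
    have : ¬ Odd n := fun ⟨m, hm⟩ => hn ⟨m, hm.symm⟩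
    simp [sinMuCoeff, this]
  refine ((hinj.hasSum_iff hzero).mpr (hasSum_sinMu hμ t)).congr_fun fun m => ?_
  have hm : (2 * m + 1) / 2 = m := by omega
  simp only [Function.comp_apply, sinMuCoeff, if_pos (odd_two_mul_add_one m), hm]
  ring

theorem rpow_mul_div_two_rpow_mul_two_rpow {x : ℝ} (hx : 0 < x) (μ : ℝ) (m : ℕ) :
    x ^ (1/2 - μ) * (x / 2) ^ ((2 * m : ℝ) + (μ + 1/2)) * 2 ^ (μ - 1/2) =
      x ^ (2 * m + 1) / 2 ^ (2 * m + 1) := by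
  set s : ℝ := 2 * m + (μ + 1/2)
  have hx_exp : 1/2 - μ + s = ((2 * m + 1 : ℕ) : ℝ) := by push_cast; ring
  have h2_exp : s - (μ - 1/2) = ((2 * m + 1 : ℕ) : ℝ) := by push_cast; ring
  calc x ^ (1/2 - μ) * (x / 2) ^ s * 2 ^ (μ - 1/2)
      = x ^ (1/2 - μ) * x ^ s / (2 ^ s / 2 ^ (μ - 1/2)) := by
        rw [Real.div_rpow hx.le zero_le_two]
        field_simp
    _ = x ^ (2 * m + 1) / 2 ^ (2 * m + 1) := by
        rw [← Real.rpow_add hx, ← Real.rpow_sub zero_lt_two, hx_exp, h2_exp, Real.rpow_natCast,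
          Real.rpow_natCast]

theorem sinMu_eq_besselJ (hμ : -(1/2 : ℝ) < μ) {x : ℝ} (hx : 0 < x) :
    sinMu μ x = Real.Gamma (μ + 1/2) * 2 ^ (μ - 1/2) * x ^ (1/2 - μ) * besselJ (μ + 1/2) x := by
  rw [besselJ, ← tsum_mul_left, ← (hasSum_sinMu_odd hμ x).tsum_eq]
  refine tsum_congr fun m => ?_
  have hγ := gammaMu_two_mul_add_one_mul_Gamma hμ m
  have hΓ : 0 < Real.Gamma (μ + 1/2) := Real.Gamma_pos_of_pos (by linarith)
  have hΓm : 0 < Real.Gamma (μ + m + 3/2) := Real.Gamma_pos_of_pos (by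
    have : (0 : ℝ) ≤ m := m.cast_nonneg
    linarith)
  have hγ' : gammaMu μ (2 * m + 1) =
      2 ^ (2 * m + 1) * m.factorial * Real.Gamma (μ + m + 3/2) / Real.Gamma (μ + 1/2) := by
    rw [eq_div_iff hΓ.ne', hγ]
  rw [show μ + 1/2 + m + 1 = μ + m + 3/2 by ring]
  calc (-1) ^ m * x ^ (2 * m + 1) / gammaMu μ (2 * m + 1)
      = Real.Gamma (μ + 1/2) * ((-1) ^ m / (m.factorial * Real.Gamma (μ + m + 3/2))) *
          (x ^ (1/2 - μ) * (x / 2) ^ ((2 * m : ℝ) + (μ + 1/2)) * 2 ^ (μ - 1/2)) := by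
        rw [rpow_mul_div_two_rpow_mul_two_rpow hx, hγ']
        field_simp
    _ = _ := by ring

theorem four_mul_sinMu_sq_div (hμ : -(1/2 : ℝ) < μ) {x : ℝ} (hx : 0 < x) :
    4 * sinMu μ x ^ 2 / x = (2 : ℝ) ^ (2 * μ + 1) * Real.Gamma (μ + 1/2) ^ 2 * x ^ (-(2 * μ)) *
      besselJ (μ + 1/2) x ^ 2 := by
  have h2 : 4 * ((2 : ℝ) ^ (μ - 1/2)) ^ 2 = (2 : ℝ) ^ (2 * μ + 1) := by
    rw [show 2 * μ + 1 = (μ - 1/2) * (2 : ℕ) + (2 : ℕ) by push_cast; ring,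
      Real.rpow_add two_pos, Real.rpow_mul zero_le_two, Real.rpow_natCast, Real.rpow_natCast]
    ring
  have hx2 : (x ^ (1/2 - μ)) ^ 2 / x = x ^ (-(2 * μ)) := by
    rw [show -(2 * μ) = (1/2 - μ) * (2 : ℕ) - 1 by push_cast; ring, Real.rpow_sub_one hx.ne',
      Real.rpow_mul hx.le, Real.rpow_natCast]
  rw [sinMu_eq_besselJ hμ hx, ← h2, ← hx2]
  ring

end Bessel

theorem exists_sinMu_ne_zero {μ : ℝ} (hμ : -(1/2 : ℝ) < μ) {a b : ℝ} (hab : a < b) :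
    ∃ c ∈ Set.Ioo a b, sinMu μ c ≠ 0 := by
  by_contra! h
  have hS := hasFPowerSeriesOnBall_tsum_mul_pow (radius_sinMuCoeff hμ)
  have hzero : sinMu μ = 0 := by
    have hmid : (a + b) / 2 ∈ Set.Ioo a b := ⟨by linarith, by linarith⟩
    have hev : sinMu μ =ᶠ[nhds ((a + b) / 2)] 0 :=
      Filter.eventually_of_mem (Ioo_mem_nhds hmid.1 hmid.2) h
    exact funext fun y => AnalyticOnNhd.eqOn_zero_of_preconnected_of_eventuallyEq_zero
      (fun y _ => hS.analyticAt_of_mem (by simp)) isPreconnected_univ (Set.mem_univ _) hev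
      (Set.mem_univ y)
  have hderiv : HasDerivAt (sinMu μ) (sinMuCoeff μ 1) 0 := by
    have h0 := hS.hasFPowerSeriesAt.hasDerivAt
    simp only [ofScalars_apply_eq, one_pow, smul_eq_mul, mul_one] at h0
    exact h0
  rw [hzero] at hderiv
  have h1 : sinMuCoeff μ 1 ≠ 0 := by simp [sinMuCoeff, (gammaMu_pos hμ 1).ne']
  exact h1 (hderiv.unique (hasDerivAt_const 0 0))

theorem strictMonoOn_of_hasDerivAt_nonneg {D : Set ℝ} (hD : Convex ℝ D) {f f' : ℝ → ℝ}
    (hf : ∀ x ∈ D, HasDerivAt f (f' x) x) (hf' : ∀ x ∈ D, 0 ≤ f' x)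
    (hne : ∀ a ∈ D, ∀ b ∈ D, a < b → ∃ c ∈ Set.Ioo a b, f' c ≠ 0) : StrictMonoOn f D := by
  have hmono : MonotoneOn f D := monotoneOn_of_hasDerivWithinAt_nonneg hD
    (fun x hx => (hf x hx).continuousAt.continuousWithinAt)
    (fun x hx => (hf x (interior_subset hx)).hasDerivWithinAt)
    (fun x hx => hf' x (interior_subset hx))
  intro a ha b hb hab
  refine (hmono ha hb hab.le).lt_of_ne fun hfab => ?_
  obtain ⟨c, hc, hfc⟩ := hne a ha b hb hab
  have hsub : Set.Ioo a b ⊆ D := Set.Ioo_subset_Icc_self.trans (hD.ordConnected.out ha hb)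
  have hconst : f =ᶠ[nhds c] fun _ => f a := by
    filter_upwards [Ioo_mem_nhds hc.1 hc.2] with y hy
    exact le_antisymm (hfab ▸ hmono (hsub hy) hb hy.2.le) (hmono ha (hsub hy) hy.1.le)
  exact hfc ((hf c (hsub hc)).unique ((hasDerivAt_const c (f a)).congr_of_eventuallyEq hconst))

theorem strictAntiOn_of_hasDerivAt_nonpos {D : Set ℝ} (hD : Convex ℝ D) {f f' : ℝ → ℝ}
    (hf : ∀ x ∈ D, HasDerivAt f (f' x) x) (hf' : ∀ x ∈ D, f' x ≤ 0)
    (hne : ∀ a ∈ D, ∀ b ∈ D, a < b → ∃ c ∈ Set.Ioo a b, f' c ≠ 0) : StrictAntiOn f D := by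
  have hneg := strictMonoOn_of_hasDerivAt_nonneg hD (fun x hx => (hf x hx).neg)
    (fun x hx => neg_nonneg.mpr (hf' x hx)) fun a ha b hb hab => by
      obtain ⟨c, hc, hfc⟩ := hne a ha b hb hab
      exact ⟨c, hc, neg_ne_zero.mpr hfc⟩
  exact fun a ha b hb hab => neg_lt_neg_iff.mp (hneg ha hb hab)

theorem deriv_sq_abs_expMu_general (μ : ℝ) (hμ : -(1/2 : ℝ) < μ) :
    (∀ x : ℝ, 0 < x →
      HasDerivAt (fun t : ℝ => ‖expMu μ (-Complex.I * t)‖ ^ 2)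
        (-μ * (2 : ℝ) ^ (2 * μ + 1) * Real.Gamma (μ + 1/2) ^ 2 * x ^ (-(2 * μ)) *
          besselJ (μ + 1/2) x ^ 2) x) ∧
    (0 < μ →
      StrictAntiOn (fun t : ℝ => ‖expMu μ (-Complex.I * t)‖ ^ 2) (Set.Ioi 0)) ∧
    (μ < 0 →
      StrictMonoOn (fun t : ℝ => ‖expMu μ (-Complex.I * t)‖ ^ 2) (Set.Ioi 0)) := by
  have hφ : (fun t : ℝ => ‖expMu μ (-Complex.I * t)‖ ^ 2) =
      fun t => cosMu μ t ^ 2 + sinMu μ t ^ 2 :=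
    funext (norm_expMu_neg_I_mul_sq hμ)
  have hderiv (x : ℝ) (hx : x ∈ Set.Ioi 0) : HasDerivAt (fun t => cosMu μ t ^ 2 + sinMu μ t ^ 2)
      (-μ * (4 * sinMu μ x ^ 2 / x)) x :=
    hasDerivAt_cosMu_sq_add_sinMu_sq hμ (ne_of_gt hx)
  have hne (hμ0 : μ ≠ 0) (a : ℝ) (ha : a ∈ Set.Ioi 0) (b : ℝ) (_ : b ∈ Set.Ioi 0) (hab : a < b) :
      ∃ c ∈ Set.Ioo a b, -μ * (4 * sinMu μ c ^ 2 / c) ≠ 0 := by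
    obtain ⟨c, hc, hSc⟩ := exists_sinMu_ne_zero hμ hab
    have hc0 : 0 < c := lt_trans ha hc.1
    exact ⟨c, hc, mul_ne_zero (neg_ne_zero.mpr hμ0) (by positivity)⟩
  rw [hφ]
  refine ⟨fun x hx => ?_, fun hpos => ?_, fun hneg => ?_⟩
  · convert hderiv x hx using 1
    rw [four_mul_sinMu_sq_div hμ hx]
    ring
  · refine strictAntiOn_of_hasDerivAt_nonpos (convex_Ioi 0) hderiv (fun x hx => ?_) (hne hpos.ne')
    have : 0 < x := hx
    exact mul_nonpos_of_nonpos_of_nonneg (by linarith) (by positivity)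
  · refine strictMonoOn_of_hasDerivAt_nonneg (convex_Ioi 0) hderiv (fun x hx => ?_) (hne hneg.ne)
    have : 0 < x := hx
    exact mul_nonneg (by linarith) (by positivity)

theorem deriv_sq_abs_expMu (μ : ℝ) (hμ : -(1/2 : ℝ) < μ) (hμ0 : μ ≠ 0) :
    (∀ x : ℝ, 0 < x →
      HasDerivAt (fun t : ℝ => ‖expMu μ (-Complex.I * t)‖ ^ 2)
        (-μ * (2 : ℝ) ^ (2 * μ + 1) * Real.Gamma (μ + 1/2) ^ 2 * x ^ (-(2 * μ)) *
          besselJ (μ + 1/2) x ^ 2) x) ∧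
    (0 < μ →
      StrictAntiOn (fun t : ℝ => ‖expMu μ (-Complex.I * t)‖ ^ 2) (Set.Ioi 0)) ∧
    (μ < 0 →
      StrictMonoOn (fun t : ℝ => ‖expMu μ (-Complex.I * t)‖ ^ 2) (Set.Ioi 0)) :=
  deriv_sq_abs_expMu_general μ hμ
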